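/- For all s_1, s_2 > 0, the span program P_AND(s_1,s_2) computes the two-bit AND function AND_2, and its witness sizes with costs (√s_1, √s_2) are: wsize_{(√s_1,√s_2)}(P_AND(s_1,s_2), x) = √(s_1+s_2) for x ∈ {(1,1), (1,0), (0,1)}, and wsize_{(√s_1,√s_2)}(P_AND(s_1,s_2), (0,0)) = √(s_1+s_2)/2. -/

import Mathlib

noncomputable section

/-- A span program on input bits indexed by `ι`, with a finite-dimensional complex inner
product space `V`, a target vector, free input vectors indexed by `Ifree`, and input
vectors indexed by `Iin j b` (available when the `j`-th input bit equals `b`). -/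
structure SpanProgram (ι : Type) where
  V : Type
  [nacg : NormedAddCommGroup V]
  [ips : InnerProductSpace ℂ V]
  [fd : FiniteDimensional ℂ V]
  Ifree : Type
  [freeFin : Fintype Ifree]
  [freeDec : DecidableEq Ifree]
  Iin : ι → Bool → Type
  [inFin : ∀ j b, Fintype (Iin j b)]
  [inDec : ∀ j b, DecidableEq (Iin j b)]
  target : V
  vfree : Ifree → V
  vin : ∀ j b, Iin j b → V

attribute [instance] SpanProgram.nacg SpanProgram.ips SpanProgram.fd
attribute [instance] SpanProgram.freeFin SpanProgram.freeDec
attribute [instance] SpanProgram.inFin SpanProgram.inDec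

namespace SpanProgram

variable {ι : Type} [Fintype ι] [DecidableEq ι]

/-- The index set `I = I_free ∪ ⋃_{j,b} I_{j,b}` of all input vectors. -/
abbrev Idx (P : SpanProgram ι) : Type := P.Ifree ⊕ Σ j : ι, Σ b : Bool, P.Iin j b

/-- All input vectors, as a single family over `Idx`. -/
def vec (P : SpanProgram ι) : P.Idx → P.V :=
  Sum.elim P.vfree (fun p => P.vin p.1 p.2.1 p.2.2)

/-- `P` evaluates to true on `x` iff the target lies in the span of the available
input vectors (the free ones together with those indexed by `I_{j, x_j}`). -/
def spanned (P : SpanProgram ι) (x : ι → Bool) : Prop :=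
  P.target ∈ Submodule.span ℂ
    (Set.range P.vfree ∪ ⋃ j : ι, Set.range (P.vin j (x j)))

/-- The boolean function computed by `P`. -/
def fP (P : SpanProgram ι) (x : ι → Bool) : Bool :=
  letI := Classical.propDecidable (P.spanned x)
  decide (P.spanned x)

/-- `w : ℂ^I` is a witness for `f_P(x) = 1`: it is supported on available input vectors,
and the input vectors weighted by `w` sum to the target. -/
def IsWitness1 (P : SpanProgram ι) (x : ι → Bool) (w : P.Idx → ℂ) : Prop :=
  (∀ (j : ι) (b : Bool) (i : P.Iin j b), b ≠ x j → w (.inr ⟨j, b, i⟩) = 0) ∧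
  ∑ i : P.Idx, w i • P.vec i = P.target

/-- `w' ∈ V` is a witness for `f_P(x) = 0`: it has unit inner product with the target and
is orthogonal to all available input vectors. -/
def IsWitness0 (P : SpanProgram ι) (x : ι → Bool) (w' : P.V) : Prop :=
  (inner ℂ P.target w' : ℂ) = 1 ∧
  (∀ i : P.Ifree, (inner ℂ (P.vfree i) w' : ℂ) = 0) ∧
  (∀ (j : ι) (i : P.Iin j (x j)), (inner ℂ (P.vin j (x j) i) w' : ℂ) = 0)

/-- `‖S|w⟩‖²`, the size of a `1`-witness `w` with costs `s`. -/
def wval1 (P : SpanProgram ι) (s : ι → ℝ) (w : P.Idx → ℂ) : ℝ :=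
  ∑ j : ι, ∑ b : Bool, ∑ i : P.Iin j b, s j * ‖w (.inr ⟨j, b, i⟩)‖ ^ 2

/-- `1 + ‖S^f|w⟩‖²`, the full size of a `1`-witness `w` with costs `s`. -/
def wval1f (P : SpanProgram ι) (s : ι → ℝ) (w : P.Idx → ℂ) : ℝ :=
  1 + (∑ i : P.Ifree, ‖w (.inl i)‖ ^ 2) + P.wval1 s w

/-- `‖S A†|w'⟩‖²`, the size of a `0`-witness `w'` with costs `s`. -/
def wval0 (P : SpanProgram ι) (s : ι → ℝ) (w' : P.V) : ℝ :=
  ∑ j : ι, ∑ b : Bool, ∑ i : P.Iin j b, s j * ‖(inner ℂ (P.vin j b i) w' : ℂ)‖ ^ 2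

/-- `‖|w'⟩‖² + ‖S A†|w'⟩‖²`, the full size of a `0`-witness `w'` with costs `s`. -/
def wval0f (P : SpanProgram ι) (s : ι → ℝ) (w' : P.V) : ℝ :=
  ‖w'‖ ^ 2 + P.wval0 s w'

/-- The witness size of `P` on input `x` with costs `s`. -/
def wsizex (P : SpanProgram ι) (s : ι → ℝ) (x : ι → Bool) : ℝ :=
  if P.fP x then sInf { r | ∃ w, P.IsWitness1 x w ∧ r = P.wval1 s w }
  else sInf { r | ∃ w', P.IsWitness0 x w' ∧ r = P.wval0 s w' }

/-- The witness size of `P` with costs `s`. -/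
def wsize (P : SpanProgram ι) (s : ι → ℝ) : ℝ := ⨆ x : ι → Bool, P.wsizex s x

/-- The full witness size of `P` on input `x` with costs `s`. -/
def wsizefx (P : SpanProgram ι) (s : ι → ℝ) (x : ι → Bool) : ℝ :=
  if P.fP x then sInf { r | ∃ w, P.IsWitness1 x w ∧ r = P.wval1f s w }
  else sInf { r | ∃ w', P.IsWitness0 x w' ∧ r = P.wval0f s w' }

/-- The full witness size of `P` with costs `s`. -/
def wsizef (P : SpanProgram ι) (s : ι → ℝ) : ℝ := ⨆ x : ι → Bool, P.wsizefx s x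

end SpanProgram

end


instance (b : Bool) : Fintype (cond b Unit Empty) :=
  match b with
  | true => inferInstanceAs (Fintype Unit)
  | false => inferInstanceAs (Fintype Empty)

instance (b : Bool) : DecidableEq (cond b Unit Empty) :=
  match b with
  | true => inferInstanceAs (DecidableEq Unit)
  | false => inferInstanceAs (DecidableEq Empty)

/-- The span program `P_AND(s₁,s₂)` computing two-bit AND: the space is `ℂ²`, the target
is `((s₁/s_p)^{1/4}, (s₂/s_p)^{1/4})` with `s_p = s₁ + s₂`, and the input vectors are
`(1,0) ∈ I_{1,1}` and `(0,1) ∈ I_{2,1}`, with `I_free = I_{1,0} = I_{2,0} = ∅`. -/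
noncomputable def PAND (s1 s2 : ℝ) : SpanProgram (Fin 2) where
  V := EuclideanSpace ℂ (Fin 2)
  Ifree := Empty
  Iin := fun _ b => cond b Unit Empty
  target := WithLp.toLp 2 (fun i => (↑(((if i = 0 then s1 else s2) / (s1 + s2)) ^ ((1 : ℝ)/4)) : ℂ))
  vfree := Empty.elim
  vin := fun j b => match b with
    | true => fun _ => EuclideanSpace.single j 1
    | false => fun i => i.elim

/-! The target `t = ((s₁/s)^{1/4}, (s₂/s)^{1/4})`, `s = s₁ + s₂`, is chosen so that
`t_j² / √s_j = 1 / √s` for both `j`. On input `11` the only `1`-witness is `t` itself, of size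
`∑ √s_j t_j² = √s`. On an input `x` with a zero bit, the `0`-witnesses are the vectors `w'`
vanishing on the coordinates where `x_j = 1` with `∑ t_j w'_j = 1`; by Cauchy–Schwarz their size
`∑ √s_j |w'_j|²` is at least `(∑_{x_j = 0} t_j² / √s_j)⁻¹ = √s / #{j | x_j = 0}`, with equality
at `w'_j ∝ t_j / √s_j`. -/

namespace SpanProgram

variable {ι : Type} (P : SpanProgram ι) {x : ι → Bool}

theorem fP_eq_true_iff : P.fP x = true ↔ P.spanned x :=
  @decide_eq_true_iff _ (Classical.propDecidable _)

theorem not_spanned_of_isWitness0 {w' : P.V} (hw' : P.IsWitness0 x w') : ¬ P.spanned x := by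
  intro h
  have hle : Submodule.span ℂ (Set.range P.vfree ∪ ⋃ j, Set.range (P.vin j (x j)))
      ≤ (ℂ ∙ w')ᗮ := by
    rw [Submodule.span_le]
    rintro v (⟨i, rfl⟩ | hv)
    · exact Submodule.mem_orthogonal_singleton_iff_inner_left.2 (hw'.2.1 i)
    · obtain ⟨j, i, rfl⟩ := Set.mem_iUnion.1 hv
      exact Submodule.mem_orthogonal_singleton_iff_inner_left.2 (hw'.2.2 j i)
  have := Submodule.mem_orthogonal_singleton_iff_inner_left.1 (hle h)
  exact one_ne_zero (hw'.1.symm.trans this)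

theorem fP_eq_false_of_isWitness0 {w' : P.V} (hw' : P.IsWitness0 x w') : P.fP x = false :=
  Bool.eq_false_iff.2 fun h => P.not_spanned_of_isWitness0 hw' ((P.fP_eq_true_iff).1 h)

variable [Fintype ι]

theorem spanned_of_isWitness1 {w : P.Idx → ℂ} (hw : P.IsWitness1 x w) : P.spanned x := by
  rw [spanned, ← hw.2]
  refine Submodule.sum_mem _ fun i _ => ?_
  rcases i with i | ⟨j, b, i⟩
  · exact Submodule.smul_mem _ _ (Submodule.subset_span (.inl ⟨i, rfl⟩))
  · by_cases hb : b = x j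
    · subst hb
      exact Submodule.smul_mem _ _
        (Submodule.subset_span (.inr (Set.mem_iUnion.2 ⟨j, i, rfl⟩)))
    · rw [hw.1 j b i hb, zero_smul]
      exact Submodule.zero_mem _

theorem fP_eq_true_of_isWitness1 {w : P.Idx → ℂ} (hw : P.IsWitness1 x w) : P.fP x = true :=
  (P.fP_eq_true_iff).2 (P.spanned_of_isWitness1 hw)

theorem wsizex_eq_of_isLeast_wval1 {s : ι → ℝ} {r : ℝ}
    (h : IsLeast {r | ∃ w, P.IsWitness1 x w ∧ r = P.wval1 s w} r) : P.wsizex s x = r := by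
  obtain ⟨w, hw, -⟩ := h.1
  rw [wsizex, if_pos (P.fP_eq_true_of_isWitness1 hw)]
  exact h.csInf_eq

theorem wsizex_eq_of_isLeast_wval0 {s : ι → ℝ} {r : ℝ}
    (h : IsLeast {r | ∃ w', P.IsWitness0 x w' ∧ r = P.wval0 s w'} r) : P.wsizex s x = r := by
  obtain ⟨w', hw', -⟩ := h.1
  rw [wsizex, P.fP_eq_false_of_isWitness0 hw']
  exact h.csInf_eq

end SpanProgram

theorem isLeast_sum_mul_norm_sq {ι : Type*} (F : Finset ι) {a c : ι → ℝ}
    (hc : ∀ i ∈ F, 0 < c i) (hS : ∑ i ∈ F, a i ^ 2 / c i ≠ 0) :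
    IsLeast {r | ∃ w : ι → ℂ, ∑ i ∈ F, (a i : ℂ) * w i = 1 ∧ r = ∑ i ∈ F, c i * ‖w i‖ ^ 2}
      (∑ i ∈ F, a i ^ 2 / c i)⁻¹ := by
  set S := ∑ i ∈ F, a i ^ 2 / c i with hS_def
  have hS₀ : 0 < S := lt_of_le_of_ne
    (Finset.sum_nonneg fun i hi => div_nonneg (sq_nonneg _) (hc i hi).le) (Ne.symm hS)
  constructor
  · refine ⟨fun i => ((a i / c i / S : ℝ) : ℂ), ?_, ?_⟩
    · have h : ∑ i ∈ F, a i * (a i / c i / S) = 1 := by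
        simp_rw [← mul_div_assoc, ← sq]
        rw [← Finset.sum_div, ← hS_def, div_self hS]
      simp only [← Complex.ofReal_mul, ← Complex.ofReal_sum, h, Complex.ofReal_one]
    · have h : ∀ i ∈ F, c i * ‖((a i / c i / S : ℝ) : ℂ)‖ ^ 2 = a i ^ 2 / c i / S ^ 2 := by
        intro i hi
        have := (hc i hi).ne'
        rw [Complex.norm_real, Real.norm_eq_abs, sq_abs]
        field_simp
      rw [Finset.sum_congr rfl h, ← Finset.sum_div, ← hS_def, sq, div_mul_cancel_left₀ hS]
  · rintro r ⟨w, hw, rfl⟩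
    have h1 : 1 ≤ ∑ i ∈ F, |a i| * ‖w i‖ := by
      calc (1 : ℝ) = ‖∑ i ∈ F, (a i : ℂ) * w i‖ := by rw [hw, norm_one]
        _ ≤ ∑ i ∈ F, ‖(a i : ℂ) * w i‖ := norm_sum_le _ _
        _ = ∑ i ∈ F, |a i| * ‖w i‖ := by simp only [norm_mul, Complex.norm_real, Real.norm_eq_abs]
    have hCS : (∑ i ∈ F, |a i| * ‖w i‖) ^ 2 ≤ S * ∑ i ∈ F, c i * ‖w i‖ ^ 2 :=
      Finset.sum_sq_le_sum_mul_sum_of_sq_le_mul F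
        (fun i hi => div_nonneg (sq_nonneg _) (hc i hi).le)
        (fun i hi => mul_nonneg (hc i hi).le (sq_nonneg _))
        (fun i hi => by
          rw [mul_pow, sq_abs]
          exact le_of_eq (by field_simp [(hc i hi).ne']))
    rw [inv_le_iff_one_le_mul₀' hS₀]
    nlinarith

-- lets `(PAND s1 s2).V` be treated as `EuclideanSpace ℂ (Fin 2)`, e.g. for coordinates `w' j`
attribute [reducible] PAND

namespace PAND

open SpanProgram Finset

variable {s1 s2 : ℝ}

noncomputable def targetCoeff (s1 s2 : ℝ) (j : Fin 2) : ℝ :=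
  ((if j = 0 then s1 else s2) / (s1 + s2)) ^ ((1 : ℝ) / 4)

theorem vin_true (j : Fin 2) (i : (PAND s1 s2).Iin j true) :
    (PAND s1 s2).vin j true i = EuclideanSpace.single j 1 := rfl

theorem sum_bool_iin (j : Fin 2) {M : Type} [AddCommMonoid M]
    (g : ∀ b, (PAND s1 s2).Iin j b → M) : ∑ b, ∑ i, g b i = g true () := by
  have : Unique ((PAND s1 s2).Iin j true) := inferInstanceAs (Unique Unit)
  have : IsEmpty ((PAND s1 s2).Iin j false) := inferInstanceAs (IsEmpty Empty)
  rw [Fintype.sum_bool, Fintype.sum_unique, Fintype.sum_empty, add_zero]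
  rfl

theorem sum_idx {M : Type} [AddCommMonoid M] (f : (PAND s1 s2).Idx → M) :
    ∑ i, f i = ∑ j, f (.inr ⟨j, true, ()⟩) := by
  have : IsEmpty (PAND s1 s2).Ifree := inferInstanceAs (IsEmpty Empty)
  rw [Fintype.sum_sum_type, Fintype.sum_empty, zero_add, Fintype.sum_sigma]
  refine Fintype.sum_congr _ _ fun j => ?_
  rw [Fintype.sum_sigma]
  exact sum_bool_iin j fun b i => f (.inr ⟨j, b, i⟩)

theorem wval1_eq (c : Fin 2 → ℝ) (w : (PAND s1 s2).Idx → ℂ) :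
    (PAND s1 s2).wval1 c w = ∑ j, c j * ‖w (.inr ⟨j, true, ()⟩)‖ ^ 2 :=
  Fintype.sum_congr _ _ fun j => sum_bool_iin j fun b i => c j * ‖w (.inr ⟨j, b, i⟩)‖ ^ 2

theorem inner_vin_true (j : Fin 2) (i : (PAND s1 s2).Iin j true) (w' : (PAND s1 s2).V) :
    inner ℂ ((PAND s1 s2).vin j true i) w' = w' j := by
  rw [vin_true, EuclideanSpace.inner_single_left, map_one, one_mul]

theorem wval0_eq (c : Fin 2 → ℝ) (w' : (PAND s1 s2).V) :
    (PAND s1 s2).wval0 c w' = ∑ j, c j * ‖w' j‖ ^ 2 := by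
  refine Fintype.sum_congr _ _ fun j => ?_
  rw [sum_bool_iin j fun b i => c j * ‖(inner ℂ ((PAND s1 s2).vin j b i) w' : ℂ)‖ ^ 2,
    inner_vin_true]

theorem inner_target (w' : (PAND s1 s2).V) :
    inner ℂ (PAND s1 s2).target w' = ∑ j, (targetCoeff s1 s2 j : ℂ) * w' j := by
  simp only [PiLp.inner_apply, RCLike.inner_apply, Complex.conj_ofReal, mul_comm]
  rfl

theorem isWitness1_true_true_iff (w : (PAND s1 s2).Idx → ℂ) :
    (PAND s1 s2).IsWitness1 ![true, true] w ↔
      ∀ j, w (.inr ⟨j, true, ()⟩) = targetCoeff s1 s2 j := by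
  have hsupp : ∀ j b (i : (PAND s1 s2).Iin j b), b ≠ ![true, true] j →
      w (.inr ⟨j, b, i⟩) = 0 := by
    rintro j (_ | _) i hb
    · exact i.elim
    · fin_cases j <;> exact absurd rfl hb
  rw [IsWitness1, and_iff_right hsupp, sum_idx, ← (WithLp.ofLp_injective (p := 2)).eq_iff,
    funext_iff]
  refine forall_congr' fun k => ?_
  simp only [vec, Sum.elim_inr, WithLp.ofLp_sum, WithLp.ofLp_smul, Finset.sum_apply,
    Pi.smul_apply, PiLp.single_apply, smul_eq_mul, mul_ite, mul_one, mul_zero, sum_ite_eq,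
    mem_univ, if_true]
  rfl

theorem isWitness0_iff (x : Fin 2 → Bool) (w' : (PAND s1 s2).V) :
    (PAND s1 s2).IsWitness0 x w' ↔
      ∑ j, (targetCoeff s1 s2 j : ℂ) * w' j = 1 ∧ ∀ j, x j = true → w' j = 0 := by
  have hfree : ∀ i : (PAND s1 s2).Ifree, inner ℂ ((PAND s1 s2).vfree i) w' = 0 := nofun
  rw [IsWitness0, inner_target, and_iff_right hfree]
  refine and_congr_right' (forall_congr' fun j => ?_)
  generalize x j = b
  cases b
  · simp
  · simp [EuclideanSpace.inner_single_left]

theorem targetCoeff_sq (h1 : 0 < s1) (h2 : 0 < s2) (j : Fin 2) :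
    targetCoeff s1 s2 j ^ 2 = ![√s1, √s2] j / √(s1 + s2) := by
  have hsel : 0 ≤ (if j = 0 then s1 else s2) := by split_ifs <;> positivity
  rw [targetCoeff, ← Real.rpow_natCast, ← Real.rpow_mul (div_nonneg hsel (by positivity)),
    show (1 : ℝ) / 4 * (2 : ℕ) = 1 / 2 by norm_num, ← Real.sqrt_eq_rpow,
    Real.sqrt_div' _ (by positivity)]
  fin_cases j <;> rfl

theorem cost_pos (h1 : 0 < s1) (h2 : 0 < s2) (j : Fin 2) : 0 < ![√s1, √s2] j := by
  fin_cases j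
  exacts [Real.sqrt_pos.2 h1, Real.sqrt_pos.2 h2]

theorem targetCoeff_sq_div_cost (h1 : 0 < s1) (h2 : 0 < s2) (j : Fin 2) :
    targetCoeff s1 s2 j ^ 2 / ![√s1, √s2] j = (√(s1 + s2))⁻¹ := by
  rw [targetCoeff_sq h1 h2, div_div_cancel_left' (cost_pos h1 h2 j).ne']

theorem sum_cost_mul_targetCoeff_sq (h1 : 0 < s1) (h2 : 0 < s2) :
    ∑ j, ![√s1, √s2] j * targetCoeff s1 s2 j ^ 2 = √(s1 + s2) := by
  simp only [targetCoeff_sq h1 h2, Fin.sum_univ_two]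
  change √s1 * (√s1 / √(s1 + s2)) + √s2 * (√s2 / √(s1 + s2)) = √(s1 + s2)
  rw [← mul_div_assoc, ← mul_div_assoc, Real.mul_self_sqrt h1.le, Real.mul_self_sqrt h2.le,
    ← add_div, Real.div_sqrt]

theorem isLeast_wval1_true_true (h1 : 0 < s1) (h2 : 0 < s2) :
    IsLeast {r | ∃ w, (PAND s1 s2).IsWitness1 ![true, true] w ∧
      r = (PAND s1 s2).wval1 ![√s1, √s2] w} √(s1 + s2) := by
  suffices h : {r | ∃ w, (PAND s1 s2).IsWitness1 ![true, true] w ∧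
      r = (PAND s1 s2).wval1 ![√s1, √s2] w} = {√(s1 + s2)} by
    rw [h]
    exact isLeast_singleton
  ext r
  simp only [Set.mem_ofPred_eq, Set.mem_singleton_iff, isWitness1_true_true_iff]
  constructor
  · rintro ⟨w, hw, rfl⟩
    simp only [wval1_eq, hw, Complex.norm_real, Real.norm_eq_abs, sq_abs]
    exact sum_cost_mul_targetCoeff_sq h1 h2
  · rintro rfl
    refine ⟨Sum.elim isEmptyElim fun p => targetCoeff s1 s2 p.1, fun j => rfl, ?_⟩
    simp only [wval1_eq, Sum.elim_inr, Complex.norm_real, Real.norm_eq_abs, sq_abs]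
    exact (sum_cost_mul_targetCoeff_sq h1 h2).symm

theorem wval0_set_eq (c : Fin 2 → ℝ) (x : Fin 2 → Bool) :
    {r | ∃ w', (PAND s1 s2).IsWitness0 x w' ∧ r = (PAND s1 s2).wval0 c w'} =
      {r | ∃ w : Fin 2 → ℂ, ∑ j with x j = false, (targetCoeff s1 s2 j : ℂ) * w j = 1 ∧
        r = ∑ j with x j = false, c j * ‖w j‖ ^ 2} := by
  ext r
  simp only [Set.mem_ofPred_eq, isWitness0_iff, wval0_eq, Finset.sum_filter]
  constructor
  · rintro ⟨w', ⟨hsum, hzero⟩, rfl⟩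
    refine ⟨w', hsum ▸ Fintype.sum_congr _ _ fun j => ?_, Fintype.sum_congr _ _ fun j => ?_⟩
    all_goals cases hj : x j <;> simp [hj, hzero j]
  · rintro ⟨w, hsum, rfl⟩
    refine ⟨WithLp.toLp 2 fun j => if x j = false then w j else 0, ⟨?_, ?_⟩, ?_⟩
    · rw [← hsum]
      exact Fintype.sum_congr _ _ fun j => by split_ifs <;> simp [*]
    · intro j hj
      simp [hj]
    · exact Fintype.sum_congr _ _ fun j => by split_ifs <;> simp [*]

theorem isLeast_wval0 (h1 : 0 < s1) (h2 : 0 < s2) (x : Fin 2 → Bool) (hx : ∃ j, x j = false) :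
    IsLeast {r | ∃ w', (PAND s1 s2).IsWitness0 x w' ∧ r = (PAND s1 s2).wval0 ![√s1, √s2] w'}
      (√(s1 + s2) / #{j | x j = false}) := by
  have hS : ∑ j with x j = false, targetCoeff s1 s2 j ^ 2 / ![√s1, √s2] j
      = #{j | x j = false} * (√(s1 + s2))⁻¹ := by
    simp only [targetCoeff_sq_div_cost h1 h2, Finset.sum_const, nsmul_eq_mul]
  have hcard : (#{j | x j = false} : ℝ) ≠ 0 := by
    obtain ⟨j, hj⟩ := hx
    exact Nat.cast_ne_zero.2 (card_ne_zero_of_mem (mem_filter.2 ⟨mem_univ j, hj⟩))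
  rw [wval0_set_eq]
  convert isLeast_sum_mul_norm_sq _ (fun j _ => cost_pos h1 h2 j)
    (hS ▸ mul_ne_zero hcard (by positivity)) using 1
  rw [hS, mul_inv, inv_inv, div_eq_mul_inv, mul_comm]

theorem fP_eq_and (h1 : 0 < s1) (h2 : 0 < s2) (x : Fin 2 → Bool) :
    (PAND s1 s2).fP x = (x 0 && x 1) := by
  by_cases hx : ∃ j, x j = false
  · obtain ⟨w', hw', -⟩ := (isLeast_wval0 h1 h2 x hx).1
    obtain ⟨j, hj⟩ := hx
    rw [fP_eq_false_of_isWitness0 _ hw']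
    fin_cases j <;> simp_all
  · have hx' : x = ![true, true] := by
      simp only [not_exists, Bool.not_eq_false] at hx
      ext j
      fin_cases j <;> simp [hx]
    subst hx'
    obtain ⟨w, hw, -⟩ := (isLeast_wval1_true_true h1 h2).1
    exact fP_eq_true_of_isWitness1 _ hw

end PAND

/-- `P_AND(s₁,s₂)` computes `AND₂` and its witness sizes with costs
`(√s₁, √s₂)` are `√(s₁+s₂)` on inputs `11, 10, 01` and `√(s₁+s₂)/2` on input `00`. -/
theorem PAND_witness_sizes (s1 s2 : ℝ) (h1 : 0 < s1) (h2 : 0 < s2) :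
    (∀ x, (PAND s1 s2).fP x = (x 0 && x 1)) ∧
    (PAND s1 s2).wsizex ![Real.sqrt s1, Real.sqrt s2] ![true, true]
      = Real.sqrt (s1 + s2) ∧
    (PAND s1 s2).wsizex ![Real.sqrt s1, Real.sqrt s2] ![true, false]
      = Real.sqrt (s1 + s2) ∧
    (PAND s1 s2).wsizex ![Real.sqrt s1, Real.sqrt s2] ![false, true]
      = Real.sqrt (s1 + s2) ∧
    (PAND s1 s2).wsizex ![Real.sqrt s1, Real.sqrt s2] ![false, false]
      = Real.sqrt (s1 + s2) / 2 := by
  refine ⟨PAND.fP_eq_and h1 h2,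
    (PAND s1 s2).wsizex_eq_of_isLeast_wval1 (PAND.isLeast_wval1_true_true h1 h2), ?_, ?_, ?_⟩
  all_goals
    rw [(PAND s1 s2).wsizex_eq_of_isLeast_wval0 (PAND.isLeast_wval0 h1 h2 _ ?_),
      Finset.card_filter, Fin.sum_univ_two]
    · norm_num
    · decide
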